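/- If a finite set S of pairwise orthogonal unit vectors in ℂ^2 ⊗ ℂ^d consists only of product vectors, then S can be extended to an orthonormal basis of ℂ^2 ⊗ ℂ^d consisting only of product vectors. -/

import Mathlib

/-!
Induct on `dim K` for orthonormal product sets inside `ℂ² ⊗ K`. Pick `x₀ = w ⊗ p₀` in the set
and complete `w` to an orthonormal basis `(w, w')` of `ℂ²`. The members of the form `w ⊗ p` and
`w' ⊗ q` give orthonormal families `P` and `Q` in `K`; completing both to orthonormal bases of
`H = span (P ∪ Q)` yields a product basis of `ℂ² ⊗ H`. Every other member `u ⊗ v` has `u`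
orthogonal to neither `w` nor `w'` (this is where `dim ℂ² = 2` enters), so orthogonality to the
members on the two lines forces `v ⊥ H`. These members therefore lie in `ℂ² ⊗ (Hᗮ ⊓ K)`, which has
smaller dimension because `p₀ ∈ H`, and the induction hypothesis completes them.
-/

noncomputable section

/-- A product vector of `ℂ^2 ⊗ ℂ^d`. -/
def IsProdVec {d : ℕ} (x : EuclideanSpace ℂ (Fin 2 × Fin d)) : Prop :=
  ∃ (u : Fin 2 → ℂ) (v : Fin d → ℂ), x = WithLp.toLp 2 (fun p : Fin 2 × Fin d => u p.1 * v p.2)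

open Submodule
open scoped InnerProductSpace

section InnerProductSpace

variable {𝕜 E F : Type*} [RCLike 𝕜] [NormedAddCommGroup E] [InnerProductSpace 𝕜 E]
  [NormedAddCommGroup F] [InnerProductSpace 𝕜 F]

theorem Orthonormal.union {s t : Set E} (hs : Orthonormal 𝕜 ((↑) : s → E))
    (ht : Orthonormal 𝕜 ((↑) : t → E)) (hst : ∀ x ∈ s, ∀ y ∈ t, ⟪x, y⟫_𝕜 = 0) :
    Orthonormal 𝕜 ((↑) : ↥(s ∪ t) → E) := by
  classical
  have hne : ∀ x ∈ s, ∀ y ∈ t, x ≠ y := by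
    rintro x hx _ hy rfl
    exact hs.ne_zero ⟨x, hx⟩ (inner_self_eq_zero.1 (hst x hx x hy))
  rw [orthonormal_subtype_iff_ite] at *
  rintro x (hx | hx) y (hy | hy)
  · exact hs x hx y hy
  · rw [hst x hx y hy, if_neg (hne x hx y hy)]
  · rw [← inner_conj_symm, hst y hy x hx, if_neg (hne y hy x hx).symm, map_zero]
  · exact ht x hx y hy

theorem Orthonormal.image_linearIsometry {s : Set E} (hs : Orthonormal 𝕜 ((↑) : s → E))
    (f : E →ₗᵢ[𝕜] F) : Orthonormal 𝕜 ((↑) : f '' s → F) := by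
  have := (hs.comp_linearIsometry f).toSubtypeRange
  rwa [Set.range_comp, Subtype.range_coe] at this

theorem Orthonormal.preimage_linearIsometry {s : Set F} (hs : Orthonormal 𝕜 ((↑) : s → F))
    (f : E →ₗᵢ[𝕜] F) : Orthonormal 𝕜 ((↑) : f ⁻¹' s → E) := by
  classical
  rw [orthonormal_subtype_iff_ite] at *
  intro x hx y hy
  rw [← f.inner_map_map, hs _ hx _ hy, f.injective.eq_iff]

variable [FiniteDimensional 𝕜 E]

theorem Orthonormal.exists_superset_span_eq {K : Submodule 𝕜 E} {s : Set E}
    (hs : Orthonormal 𝕜 ((↑) : s → E)) (hsK : s ⊆ K) :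
    ∃ t, s ⊆ t ∧ Orthonormal 𝕜 ((↑) : t → E) ∧ span 𝕜 t = K := by
  obtain ⟨u, b, hsu, hb⟩ :=
    (hs.preimage_linearIsometry K.subtypeₗᵢ).exists_orthonormalBasis_extension
  refine ⟨K.subtype '' u, fun x hx => ⟨⟨x, hsK hx⟩, hsu hx, rfl⟩, ?_, ?_⟩
  · exact (hb ▸ b.orthonormal).image_linearIsometry K.subtypeₗᵢ
  · have hu : span 𝕜 (u : Set K) = ⊤ := by
      simpa [hb] using b.toBasis.span_eq
    rw [span_image, hu, map_subtype_top]

theorem Submodule.finrank_orthogonal_inf_lt {H K : Submodule 𝕜 E} (hHK : H ≤ K) (hH : H ≠ ⊥) :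
    Module.finrank 𝕜 ↥(Hᗮ ⊓ K) < Module.finrank 𝕜 K := by
  have hsum := finrank_add_inf_finrank_orthogonal hHK
  have hpos := Submodule.finrank_eq_zero.not.2 hH
  omega

end InnerProductSpace

namespace QubitQudit

variable {ι : Type*}

def prodVec :
    EuclideanSpace ℂ (Fin 2) →ₗ[ℂ] EuclideanSpace ℂ ι →ₗ[ℂ] EuclideanSpace ℂ (Fin 2 × ι) :=
  LinearMap.mk₂ ℂ (fun u v => WithLp.toLp 2 fun p => u p.1 * v p.2)
    (fun _ _ _ => by ext; simp [add_mul]) (fun _ _ _ => by ext; simp [mul_assoc])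
    (fun _ _ _ => by ext; simp [mul_add]) (fun _ _ _ => by ext; simp [mul_left_comm])

@[simp]
theorem prodVec_apply (u : EuclideanSpace ℂ (Fin 2)) (v : EuclideanSpace ℂ ι) (p : Fin 2 × ι) :
    prodVec u v p = u p.1 * v p.2 := rfl

def IsProd (x : EuclideanSpace ℂ (Fin 2 × ι)) : Prop :=
  ∃ u v, prodVec u v = x

def slice (i : Fin 2) : EuclideanSpace ℂ (Fin 2 × ι) →ₗ[ℂ] EuclideanSpace ℂ ι where
  toFun x := WithLp.toLp 2 fun j => x (i, j)
  map_add' _ _ := rfl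
  map_smul' _ _ := rfl

@[simp]
theorem slice_apply (i : Fin 2) (x : EuclideanSpace ℂ (Fin 2 × ι)) (j : ι) :
    slice i x j = x (i, j) := rfl

theorem slice_prodVec (i : Fin 2) (u : EuclideanSpace ℂ (Fin 2)) (v : EuclideanSpace ℂ ι) :
    slice i (prodVec u v) = u i • v := by
  ext; simp

/-- `ℂ² ⊗ K`, realised as the vectors of `ℂ² ⊗ ℂ^ι` whose two slices lie in `K`. -/
def twoTensor (K : Submodule ℂ (EuclideanSpace ℂ ι)) :
    Submodule ℂ (EuclideanSpace ℂ (Fin 2 × ι)) :=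
  ⨅ i, K.comap (slice i)

variable {K L : Submodule ℂ (EuclideanSpace ℂ ι)}

theorem mem_twoTensor {x : EuclideanSpace ℂ (Fin 2 × ι)} :
    x ∈ twoTensor K ↔ ∀ i, slice i x ∈ K := by
  simp [twoTensor]

@[simp]
theorem twoTensor_top : twoTensor (⊤ : Submodule ℂ (EuclideanSpace ℂ ι)) = ⊤ := by
  simp [twoTensor]

theorem twoTensor_mono (h : K ≤ L) : twoTensor K ≤ twoTensor L :=
  fun _ hx => mem_twoTensor.2 fun i => h (mem_twoTensor.1 hx i)

theorem twoTensor_inf : twoTensor (K ⊓ L) = twoTensor K ⊓ twoTensor L := by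
  ext x
  simp [mem_twoTensor, forall_and]

theorem prodVec_mem_twoTensor (u : EuclideanSpace ℂ (Fin 2)) {v : EuclideanSpace ℂ ι}
    (hv : v ∈ K) : prodVec u v ∈ twoTensor K :=
  mem_twoTensor.2 fun i => by rw [slice_prodVec]; exact K.smul_mem _ hv

theorem mem_of_prodVec_mem_twoTensor {u : EuclideanSpace ℂ (Fin 2)} {v : EuclideanSpace ℂ ι}
    (hu : u ≠ 0) (h : prodVec u v ∈ twoTensor K) : v ∈ K := by
  obtain ⟨i, hi⟩ : ∃ i, u i ≠ 0 := by
    by_contra! h0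
    exact hu (by ext i; exact h0 i)
  have := K.smul_mem (u i)⁻¹ (mem_twoTensor.1 h i)
  rwa [slice_prodVec, smul_smul, inv_mul_cancel₀ hi, one_smul] at this

theorem twoTensor_le_of_prodVec_mem {M : Submodule ℂ (EuclideanSpace ℂ (Fin 2 × ι))}
    (h : ∀ u, ∀ v ∈ K, prodVec u v ∈ M) : twoTensor K ≤ M := by
  intro x hx
  have hsum : ∑ i, prodVec (EuclideanSpace.single i 1) (slice i x) = x := by
    ext ⟨i, j⟩
    fin_cases i <;> simp
  rw [← hsum]
  exact M.sum_mem fun i _ => h _ _ (mem_twoTensor.1 hx i)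

theorem twoTensor_sup : twoTensor (K ⊔ L) = twoTensor K ⊔ twoTensor L := by
  refine le_antisymm (twoTensor_le_of_prodVec_mem fun u v hv => ?_)
    (sup_le (twoTensor_mono le_sup_left) (twoTensor_mono le_sup_right))
  obtain ⟨a, ha, b, hb, rfl⟩ := mem_sup.1 hv
  rw [map_add]
  exact add_mem_sup (prodVec_mem_twoTensor u ha) (prodVec_mem_twoTensor u hb)

theorem prodVec_eq_sum {κ : Type*} [Fintype κ]
    (b : OrthonormalBasis κ ℂ (EuclideanSpace ℂ (Fin 2))) (u : EuclideanSpace ℂ (Fin 2))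
    (v : EuclideanSpace ℂ ι) : prodVec u v = ∑ k, prodVec (b k) (⟪b k, u⟫_ℂ • v) := by
  conv_lhs => rw [← b.sum_repr' u]
  simp [map_sum, LinearMap.sum_apply]

theorem prodVec_mem_range_of_inner_eq_zero
    (b : OrthonormalBasis (Fin 2) ℂ (EuclideanSpace ℂ (Fin 2))) {i j : Fin 2} (hij : i ≠ j)
    {u : EuclideanSpace ℂ (Fin 2)} (hu : ⟪b i, u⟫_ℂ = 0) (v : EuclideanSpace ℂ ι) :
    prodVec u v ∈ Set.range (prodVec (b j)) := by
  refine ⟨⟪b j, u⟫_ℂ • v, ?_⟩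
  rw [prodVec_eq_sum b u v, Fintype.sum_eq_single j]
  intro k hk
  obtain rfl : k = i := by fin_cases i <;> fin_cases j <;> fin_cases k <;> simp_all
  rw [hu, zero_smul, map_zero]

theorem exists_orthonormalBasis_mem_range_prodVec {x : EuclideanSpace ℂ (Fin 2 × ι)}
    (hx : IsProd x) (hx0 : x ≠ 0) :
    ∃ b : OrthonormalBasis (Fin 2) ℂ (EuclideanSpace ℂ (Fin 2)),
      x ∈ Set.range (prodVec (b 0)) := by
  obtain ⟨u, v, rfl⟩ := hx
  have hu : u ≠ 0 := by rintro rfl; exact hx0 (by rw [map_zero, LinearMap.zero_apply])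
  have hun : ‖(‖u‖⁻¹ : ℂ) • u‖ = 1 := by
    rw [norm_smul, norm_inv, Complex.norm_real, norm_norm, inv_mul_cancel₀ (norm_ne_zero_iff.2 hu)]
  have hon : Orthonormal ℂ (({0} : Set (Fin 2)).domRestrict fun _ => (‖u‖⁻¹ : ℂ) • u) :=
    orthonormal_subsingleton_iff.2 fun _ => hun
  obtain ⟨b, hb⟩ := hon.exists_orthonormalBasis_extension_of_card_eq finrank_euclideanSpace
  refine ⟨b, (‖u‖ : ℂ) • v, ?_⟩
  rw [hb 0 rfl, map_smul, map_smul, LinearMap.smul_apply, smul_smul,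
    mul_inv_cancel₀ (by exact_mod_cast norm_ne_zero_iff.2 hu), one_smul]

variable [Fintype ι]

theorem inner_prodVec (u u' : EuclideanSpace ℂ (Fin 2)) (v v' : EuclideanSpace ℂ ι) :
    ⟪prodVec u v, prodVec u' v'⟫_ℂ = ⟪u, u'⟫_ℂ * ⟪v, v'⟫_ℂ := by
  simp only [PiLp.inner_apply, Fintype.sum_prod_type, Finset.sum_mul_sum, prodVec_apply]
  refine Finset.sum_congr rfl fun i _ => Finset.sum_congr rfl fun j _ => ?_
  simp only [RCLike.inner_apply, map_mul]
  ring

def prodVecIsometry {w : EuclideanSpace ℂ (Fin 2)} (hw : ‖w‖ = 1) :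
    EuclideanSpace ℂ ι →ₗᵢ[ℂ] EuclideanSpace ℂ (Fin 2 × ι) :=
  (prodVec w).isometryOfInner fun v v' => by
    rw [inner_prodVec, inner_self_eq_norm_sq_to_K, hw]
    simp

theorem inner_eq_zero_of_mem_twoTensor_orthogonal {x y : EuclideanSpace ℂ (Fin 2 × ι)}
    (hx : x ∈ twoTensor K) (hy : y ∈ twoTensor Kᗮ) : ⟪x, y⟫_ℂ = 0 := by
  have hslice : ⟪x, y⟫_ℂ = ∑ i, ⟪slice i x, slice i y⟫_ℂ := by
    simp [PiLp.inner_apply, Fintype.sum_prod_type]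
  rw [hslice]
  exact Finset.sum_eq_zero fun i _ =>
    inner_right_of_mem_orthogonal (mem_twoTensor.1 hx i) (mem_twoTensor.1 hy i)

theorem inner_eq_zero_of_prodVec_mem {s : Set (EuclideanSpace ℂ (Fin 2 × ι))}
    (hs : Orthonormal ℂ ((↑) : s → EuclideanSpace ℂ (Fin 2 × ι)))
    {u w : EuclideanSpace ℂ (Fin 2)} {v p : EuclideanSpace ℂ ι}
    (hx : prodVec u v ∈ s) (hy : prodVec w p ∈ s) (hne : prodVec w p ≠ prodVec u v)
    (hwu : ⟪w, u⟫_ℂ ≠ 0) : ⟪p, v⟫_ℂ = 0 := by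
  have h := hs.inner_eq_zero (i := ⟨_, hy⟩) (j := ⟨_, hx⟩) fun h => hne (congrArg Subtype.val h)
  rw [inner_prodVec] at h
  exact (mul_eq_zero.1 h).resolve_left hwu

theorem mem_twoTensor_orthogonal_of_notMem_range
    (b : OrthonormalBasis (Fin 2) ℂ (EuclideanSpace ℂ (Fin 2)))
    {s : Set (EuclideanSpace ℂ (Fin 2 × ι))}
    (hs : Orthonormal ℂ ((↑) : s → EuclideanSpace ℂ (Fin 2 × ι)))
    {x : EuclideanSpace ℂ (Fin 2 × ι)} (hxs : x ∈ s) (hx : IsProd x)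
    (hx₀ : x ∉ Set.range (prodVec (b 0))) (hx₁ : x ∉ Set.range (prodVec (b 1))) :
    x ∈ twoTensor (span ℂ (prodVec (b 0) ⁻¹' s ∪ prodVec (b 1) ⁻¹' s))ᗮ := by
  obtain ⟨u, v, rfl⟩ := hx
  refine prodVec_mem_twoTensor u ((isOrtho_span.2 ?_).ge (mem_span_singleton_self v))
  rintro p (hp | hp) v' hv'
  all_goals rw [Set.mem_singleton_iff.1 hv']
  · exact inner_eq_zero_of_prodVec_mem hs hxs hp (fun h => hx₀ ⟨p, h⟩)
      fun h => hx₁ (prodVec_mem_range_of_inner_eq_zero b (by decide) h v)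
  · exact inner_eq_zero_of_prodVec_mem hs hxs hp (fun h => hx₁ ⟨p, h⟩)
      fun h => hx₀ (prodVec_mem_range_of_inner_eq_zero b (by decide) h v)

structure IsProductBasis (K : Submodule ℂ (EuclideanSpace ℂ ι))
    (t : Set (EuclideanSpace ℂ (Fin 2 × ι))) : Prop where
  isProd : ∀ x ∈ t, IsProd x
  orthonormal : Orthonormal ℂ ((↑) : t → EuclideanSpace ℂ (Fin 2 × ι))
  span_eq : span ℂ t = twoTensor K

theorem IsProductBasis.union {t₁ t₂ : Set (EuclideanSpace ℂ (Fin 2 × ι))}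
    (h₁ : IsProductBasis K t₁) (h₂ : IsProductBasis L t₂) (hKL : L ≤ Kᗮ) :
    IsProductBasis (K ⊔ L) (t₁ ∪ t₂) where
  isProd x hx := hx.elim (h₁.isProd x) (h₂.isProd x)
  orthonormal := h₁.orthonormal.union h₂.orthonormal fun x hx y hy =>
    inner_eq_zero_of_mem_twoTensor_orthogonal (h₁.span_eq ▸ subset_span hx)
      (twoTensor_mono hKL (h₂.span_eq ▸ subset_span hy))
  span_eq := by rw [span_union, h₁.span_eq, h₂.span_eq, twoTensor_sup]

theorem exists_isProductBasis_superset_image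
    (b : OrthonormalBasis (Fin 2) ℂ (EuclideanSpace ℂ (Fin 2))) {P Q : Set (EuclideanSpace ℂ ι)}
    (hP : Orthonormal ℂ ((↑) : P → EuclideanSpace ℂ ι))
    (hQ : Orthonormal ℂ ((↑) : Q → EuclideanSpace ℂ ι)) (hPK : P ⊆ K) (hQK : Q ⊆ K) :
    ∃ t, prodVec (b 0) '' P ∪ prodVec (b 1) '' Q ⊆ t ∧ IsProductBasis K t := by
  obtain ⟨P', hPP', hP', hP'K⟩ := hP.exists_superset_span_eq hPK
  obtain ⟨Q', hQQ', hQ', hQ'K⟩ := hQ.exists_superset_span_eq hQK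
  let f := prodVecIsometry (ι := ι) (b.orthonormal.norm_eq_one 0)
  let g := prodVecIsometry (ι := ι) (b.orthonormal.norm_eq_one 1)
  refine ⟨f '' P' ∪ g '' Q', Set.union_subset_union (Set.image_mono hPP') (Set.image_mono hQQ'),
    ?_, ?_, ?_⟩
  · rintro _ (⟨p, -, rfl⟩ | ⟨q, -, rfl⟩) <;> exact ⟨_, _, rfl⟩
  · refine (hP'.image_linearIsometry f).union (hQ'.image_linearIsometry g) ?_
    rintro _ ⟨p, -, rfl⟩ _ ⟨q, -, rfl⟩
    simp [f, g, prodVecIsometry, inner_prodVec, b.orthonormal.inner_eq_zero]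
  · refine le_antisymm (span_le.2 ?_) (twoTensor_le_of_prodVec_mem fun u v hv => ?_)
    · rintro _ (⟨p, hp, rfl⟩ | ⟨q, hq, rfl⟩)
      · exact prodVec_mem_twoTensor _ (hP'K ▸ subset_span hp)
      · exact prodVec_mem_twoTensor _ (hQ'K ▸ subset_span hq)
    rw [prodVec_eq_sum b, Fin.sum_univ_two]
    refine add_mem (span_mono Set.subset_union_left ?_) (span_mono Set.subset_union_right ?_)
    · exact apply_mem_span_image_of_mem_span f.toLinearMap (hP'K ▸ K.smul_mem _ hv)
    · exact apply_mem_span_image_of_mem_span g.toLinearMap (hQ'K ▸ K.smul_mem _ hv)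

theorem exists_isProductBasis (K : Submodule ℂ (EuclideanSpace ℂ ι)) :
    ∃ t, IsProductBasis K t :=
  (exists_isProductBasis_superset_image (K := K) (EuclideanSpace.basisFun (Fin 2) ℂ)
    (orthonormal_empty ℂ _) (orthonormal_empty ℂ _) (Set.empty_subset _)
    (Set.empty_subset _)).imp fun _ => And.right

theorem exists_isProductBasis_superset (K : Submodule ℂ (EuclideanSpace ℂ ι))
    {s : Set (EuclideanSpace ℂ (Fin 2 × ι))}
    (hs : Orthonormal ℂ ((↑) : s → EuclideanSpace ℂ (Fin 2 × ι))) (hsprod : ∀ x ∈ s, IsProd x)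
    (hsK : s ⊆ twoTensor K) : ∃ t, s ⊆ t ∧ IsProductBasis K t := by
  induction hn : Module.finrank ℂ K using Nat.strong_induction_on generalizing K s with
  | _ n ih =>
  rcases s.eq_empty_or_nonempty with rfl | ⟨x₀, hx₀⟩
  · obtain ⟨t, ht⟩ := exists_isProductBasis K
    exact ⟨t, Set.empty_subset t, ht⟩
  obtain ⟨b, p₀, rfl⟩ :=
    exists_orthonormalBasis_mem_range_prodVec (hsprod x₀ hx₀) (hs.ne_zero ⟨x₀, hx₀⟩)
  let P := prodVec (b 0) ⁻¹' s
  let Q := prodVec (b 1) ⁻¹' s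
  let H := span ℂ (P ∪ Q)
  let r := s \ (Set.range (prodVec (b 0)) ∪ Set.range (prodVec (b 1)))
  have hHK : H ≤ K := span_le.2 <| Set.union_subset
    (fun p hp => mem_of_prodVec_mem_twoTensor (b.orthonormal.ne_zero 0) (hsK hp))
    (fun q hq => mem_of_prodVec_mem_twoTensor (b.orthonormal.ne_zero 1) (hsK hq))
  have hH : H ≠ ⊥ := (Submodule.ne_bot_iff H).2 ⟨p₀, subset_span (Or.inl hx₀),
    fun h => hs.ne_zero ⟨_, hx₀⟩ (by simp [h])⟩
  have hr : r ⊆ twoTensor (Hᗮ ⊓ K) := fun x ⟨hxs, hx⟩ => by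
    rw [SetLike.mem_coe, twoTensor_inf]
    exact ⟨mem_twoTensor_orthogonal_of_notMem_range b hs hxs (hsprod x hxs)
      (fun h => hx (Or.inl h)) (fun h => hx (Or.inr h)), hsK hxs⟩
  obtain ⟨t₁, hst₁, ht₁⟩ := exists_isProductBasis_superset_image (K := H) b
    (hs.preimage_linearIsometry (prodVecIsometry (b.orthonormal.norm_eq_one 0)))
    (hs.preimage_linearIsometry (prodVecIsometry (b.orthonormal.norm_eq_one 1)))
    (subset_span.trans (span_mono Set.subset_union_left))
    (subset_span.trans (span_mono Set.subset_union_right))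
  obtain ⟨t₂, hrt₂, ht₂⟩ := ih _ (hn ▸ finrank_orthogonal_inf_lt hHK hH) (Hᗮ ⊓ K)
    (hs.comp (Set.inclusion Set.sdiff_subset) (Set.inclusion_injective Set.sdiff_subset))
    (fun x hx => hsprod x hx.1) hr rfl
  have hcover : s = prodVec (b 0) '' P ∪ prodVec (b 1) '' Q ∪ r := by
    simp only [P, Q, r, Set.image_preimage_eq_inter_range, ← Set.inter_union_distrib_left,
      Set.inter_union_sdiff]
  refine ⟨t₁ ∪ t₂, hcover ▸ Set.union_subset_union hst₁ hrt₂, ?_⟩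
  simpa only [sup_orthogonal_inf_of_hasOrthogonalProjection hHK] using ht₁.union ht₂ inf_le_left

end QubitQudit

theorem isProdVec_iff_isProd {d : ℕ} {x : EuclideanSpace ℂ (Fin 2 × Fin d)} :
    IsProdVec x ↔ QubitQudit.IsProd x :=
  ⟨fun ⟨u, v, h⟩ => ⟨WithLp.toLp 2 u, WithLp.toLp 2 v, h.symm⟩,
    fun ⟨u, v, h⟩ => ⟨u.ofLp, v.ofLp, h.symm⟩⟩

theorem stmt17_general (d : ℕ) (S : Finset (EuclideanSpace ℂ (Fin 2 × Fin d)))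
    (hprod : ∀ x ∈ S, IsProdVec x)
    (hON : Orthonormal ℂ (fun x : S => (x : EuclideanSpace ℂ (Fin 2 × Fin d)))) :
    ∃ T : Finset (EuclideanSpace ℂ (Fin 2 × Fin d)),
      S ⊆ T ∧ (∀ x ∈ T, IsProdVec x) ∧
      Orthonormal ℂ (fun x : T => (x : EuclideanSpace ℂ (Fin 2 × Fin d))) ∧
      Submodule.span ℂ (T : Set (EuclideanSpace ℂ (Fin 2 × Fin d))) = ⊤ := by
  obtain ⟨t, hSt, ht⟩ := QubitQudit.exists_isProductBasis_superset ⊤ hON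
    (fun x hx => isProdVec_iff_isProd.1 (hprod x hx)) (by simp)
  lift t to Finset (EuclideanSpace ℂ (Fin 2 × Fin d))
    using ht.orthonormal.linearIndependent.setFinite
  exact ⟨t, hSt, fun x hx => isProdVec_iff_isProd.2 (ht.isProd x hx), ht.orthonormal,
    by simpa using ht.span_eq⟩

/-- a finite set of pairwise orthogonal unit product vectors in `ℂ^2 ⊗ ℂ^d`
extends to an orthonormal basis of `ℂ^2 ⊗ ℂ^d` consisting only of product vectors. -/
theorem stmt17 (d : ℕ) [NeZero d] (S : Finset (EuclideanSpace ℂ (Fin 2 × Fin d)))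
    (hprod : ∀ x ∈ S, IsProdVec x)
    (hON : Orthonormal ℂ (fun x : S => (x : EuclideanSpace ℂ (Fin 2 × Fin d)))) :
    ∃ T : Finset (EuclideanSpace ℂ (Fin 2 × Fin d)),
      S ⊆ T ∧ (∀ x ∈ T, IsProdVec x) ∧
      Orthonormal ℂ (fun x : T => (x : EuclideanSpace ℂ (Fin 2 × Fin d))) ∧
      Submodule.span ℂ (T : Set (EuclideanSpace ℂ (Fin 2 × Fin d))) = ⊤ :=
  stmt17_general d S hprod hON

end
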